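/- Assume 0 < w_b, 0 < w_f and w_b + w_f < 1, and let f be a solution of the Collatz functional equation for (5, w_b, w_f) with coefficients (aₙ). Then a₁ > 0 (this verifies the arrival conjecture for k = 5). -/

import Mathlib

/-- The open unit disc in `ℂ`. -/
def openUnitDisc : Set ℂ := {z : ℂ | ‖z‖ < 1}

/-- `f` is a solution of the Collatz functional equation for `(k, wb, wf)`:
it is analytic and bounded on the open unit disc and satisfies the functional equation
`2 f(x²) = wb (f(x) + f(−x)) + wf x² (f(x⁶) − f(−x⁶)) + 2 x^(2k)` there. -/
def IsSolution (k : ℕ) (wb wf : ℝ) (f : ℂ → ℂ) : Prop :=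
  AnalyticOnNhd ℂ f openUnitDisc ∧
  (∃ C : ℝ, ∀ z ∈ openUnitDisc, ‖f z‖ ≤ C) ∧
  ∀ x : ℂ, ‖x‖ < 1 →
    2 * f (x ^ 2) =
      (wb : ℂ) * (f x + f (-x)) + (wf : ℂ) * x ^ 2 * (f (x ^ 6) - f (-x ^ 6)) +
        2 * x ^ (2 * k)

/-- `a` is the sequence of Taylor coefficients of `f` at `0`:
`f x = Σ aₙ xⁿ` on the open unit disc. -/
def HasCoeffs (f : ℂ → ℂ) (a : ℕ → ℂ) : Prop :=
  ∀ x : ℂ, ‖x‖ < 1 → HasSum (fun n => a n * x ^ n) (f x)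

/-!
Comparing the coefficients of `x ^ (2 n)` in the functional equation gives the recursion
`aₙ = w_b a_{2n} + w_f [n ≡ 4 mod 6] a_{(n-1)/3} + [n = k]`, i.e. `a = T a + δ_k` for an operator
`T` that preserves nonnegativity and contracts the sup norm by the factor `w_b + w_f < 1`. By the
Cauchy estimates the coefficients of the bounded function `f` are bounded, so
`a = ∑_{j<N} T^j δ_k + T^N a` with `T^N a → 0`, and every `aₙ` is a nonnegative real.
Going back along the Collatz trajectory `5 → 16 → 8 → 4 → 2 → 1` in the recursion then gives
`a₁ ≥ w_b⁴ w_f > 0`.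
-/

open FormalMultilinearSeries Filter Topology
open scoped ComplexOrder

namespace Module.End

variable {ι : Type*} {T : Module.End ℝ (ι → ℂ)}

lemma pow_apply_nonneg (hT : ∀ ⦃b⦄, 0 ≤ b → 0 ≤ T b) (N : ℕ) {b : ι → ℂ} (hb : 0 ≤ b) :
    0 ≤ (T ^ N) b := by
  induction N with
  | zero => simpa
  | succ N ih => rw [pow_succ', mul_apply]; exact hT ih

lemma norm_pow_apply_le {q M : ℝ} (hT : ∀ b M, (∀ i, ‖b i‖ ≤ M) → ∀ i, ‖T b i‖ ≤ q * M)
    {b : ι → ℂ} (hb : ∀ i, ‖b i‖ ≤ M) (N : ℕ) (i : ι) : ‖(T ^ N) b i‖ ≤ q ^ N * M := by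
  induction N generalizing i with
  | zero => simpa using hb i
  | succ N ih => rw [pow_succ', mul_apply, pow_succ', mul_assoc]; exact hT _ _ ih i

lemma nonneg_of_eq_add_of_contracting (hT : ∀ ⦃b⦄, 0 ≤ b → 0 ≤ T b) {q M : ℝ} (hq₀ : 0 ≤ q)
    (hq₁ : q < 1) (hcon : ∀ b M, (∀ i, ‖b i‖ ≤ M) → ∀ i, ‖T b i‖ ≤ q * M) {a c : ι → ℂ}
    (ha : ∀ i, ‖a i‖ ≤ M) (hc : 0 ≤ c) (hac : a = T a + c) : 0 ≤ a := by
  -- `a - T ^ N a = ∑ j < N, T ^ j c`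
  have hpartial : ∀ N, 0 ≤ a - (T ^ N) a := by
    intro N
    induction N with
    | zero => simp
    | succ N ih =>
      have hTa : T a = a - c := eq_sub_of_add_eq hac.symm
      have : a - (T ^ (N + 1)) a = (a - (T ^ N) a) + (T ^ N) c := by
        rw [pow_succ, mul_apply, hTa, map_sub]; abel
      rw [this]; exact add_nonneg ih (pow_apply_nonneg hT N hc)
  intro i
  have hdecay : Tendsto (fun N => (T ^ N) a i) atTop (𝓝 0) :=
    squeeze_zero_norm (norm_pow_apply_le hcon ha · i)
      (by simpa using (tendsto_pow_atTop_nhds_zero_of_lt_one hq₀ hq₁).mul_const M)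
  have hlim : Tendsto (fun N => (a - (T ^ N) a) i) atTop (𝓝 (a i)) := by
    simpa using tendsto_const_nhds.sub hdecay
  exact ge_of_tendsto' hlim fun N => hpartial N i

end Module.End

namespace HasCoeffs

variable {f : ℂ → ℂ} {a : ℕ → ℂ} {x : ℂ}

lemma hasFPowerSeriesOnBall (ha : HasCoeffs f a) :
    HasFPowerSeriesOnBall f (ofScalars ℂ a) 0 1 where
  r_le := by
    refine ENNReal.le_of_forall_nnreal_lt fun r hr => ?_
    have hr' : ‖(r : ℂ)‖ < 1 := by simpa using hr
    refine (ofScalars ℂ a).le_radius_of_tendsto (l := 0) ?_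
    simpa [ofScalars_norm] using (ha _ hr').summable.tendsto_atTop_zero.norm
  r_pos := one_pos
  hasSum {y} hy := by
    rw [Metric.mem_eball, edist_zero_right, ← ofReal_norm, ENNReal.ofReal_lt_one] at hy
    simpa [ofScalars_apply_eq, mul_comm] using ha y hy

lemma eq_iteratedDeriv_div_factorial (ha : HasCoeffs f a) (n : ℕ) :
    a n = iteratedDeriv n f 0 / n.factorial := by
  have hp := ha.hasFPowerSeriesOnBall.hasFPowerSeriesAt
  exact congrFun (ofScalars_series_injective ℂ ℂ
    (hp.eq_formalMultilinearSeries hp.analyticAt.hasFPowerSeriesAt)) n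

lemma unique {b : ℕ → ℂ} (ha : HasCoeffs f a) (hb : HasCoeffs f b) : a = b := by
  funext n; rw [ha.eq_iteratedDeriv_div_factorial, hb.eq_iteratedDeriv_div_factorial]

lemma norm_le {C : ℝ} (ha : HasCoeffs f a) (hC : ∀ z ∈ openUnitDisc, ‖f z‖ ≤ C) (n : ℕ) :
    ‖a n‖ ≤ C := by
  have hcauchy : ∀ R ∈ Set.Ioo (0 : ℝ) 1, ‖a n‖ * R ^ n ≤ C := by
    rintro R ⟨hR₀, hR₁⟩
    have hdiff : DiffContOnCl ℂ f (Metric.ball 0 R) := by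
      refine ha.hasFPowerSeriesOnBall.differentiableOn.diffContOnCl_ball fun z hz => ?_
      rw [Metric.mem_closedBall, dist_zero_right] at hz
      rw [Metric.mem_eball, edist_zero_right, ← ofReal_norm, ENNReal.ofReal_lt_one]
      exact hz.trans_lt hR₁
    have hest := Complex.norm_iteratedDeriv_le_of_forall_mem_sphere_norm_le n hR₀ hdiff
      fun z hz => hC z (by simp_all [openUnitDisc])
    rw [le_div_iff₀ (pow_pos hR₀ n)] at hest
    rw [ha.eq_iteratedDeriv_div_factorial, norm_div, Complex.norm_natCast, div_mul_eq_mul_div,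
      div_le_iff₀ (by positivity)]
    linarith
  have hlim : Tendsto (fun R : ℝ => ‖a n‖ * R ^ n) (𝓝[<] 1) (𝓝 (‖a n‖)) :=
    ((continuous_const.mul (continuous_pow n)).tendsto' 1 _ (by simp)).mono_left
      nhdsWithin_le_nhds
  exact le_of_tendsto hlim (eventually_of_mem (Ioo_mem_nhdsLT one_pos) hcauchy)

lemma hasSum_even_part (ha : HasCoeffs f a) (hx : ‖x‖ < 1) :
    HasSum (fun n => 2 * a (2 * n) * (x ^ 2) ^ n) (f x + f (-x)) := by
  have hsum := (ha x hx).add (ha (-x) (by rwa [norm_neg]))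
  have hodd : ∀ m ∉ Set.range (2 * ·), a m * x ^ m + a m * (-x) ^ m = 0 := by
    intro m hm
    have hm' : m % 2 = 1 := by
      by_contra h; exact hm ⟨m / 2, show 2 * (m / 2) = m by omega⟩
    rw [(Nat.odd_iff.mpr hm').neg_pow]; ring
  refine (((mul_right_injective₀ two_ne_zero).hasSum_iff hodd).mpr hsum).congr_fun fun n => ?_
  simp [pow_mul, (even_two_mul n).neg_pow]
  ring

lemma hasSum_odd_part (ha : HasCoeffs f a) (hx : ‖x‖ < 1) :
    HasSum (fun n => 2 * (if n % 6 = 4 then a ((n - 1) / 3) else 0) * (x ^ 2) ^ n)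
      (x ^ 2 * (f (x ^ 6) - f (-x ^ 6))) := by
  have hx6 : ‖x ^ 6‖ < 1 := by
    rw [norm_pow]; exact pow_lt_one₀ (norm_nonneg _) hx (by norm_num)
  have hsum := ((ha _ hx6).sub (ha _ (by rwa [norm_neg]))).mul_left (x ^ 2)
  -- the `k`-th term is a multiple of `(x ^ 2) ^ (3 * k + 1)` and vanishes for even `k`
  have hinj : Function.Injective fun k : ℕ => 3 * k + 1 := fun i j h => by simp_all
  refine (hinj.hasSum_iff fun n hn => ?_).mp (hsum.congr_fun fun k => ?_)
  · have : n % 6 ≠ 4 := fun h => hn ⟨(n - 1) / 3, show 3 * ((n - 1) / 3) + 1 = n by omega⟩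
    simp [this]
  · rcases Nat.even_or_odd k with hk | hk
    · have : (3 * k + 1) % 6 ≠ 4 := by obtain ⟨j, rfl⟩ := hk; omega
      simp [this, hk.neg_pow]
    · have h4 : (3 * k + 1) % 6 = 4 := by obtain ⟨j, rfl⟩ := hk; omega
      simp [h4, hk.neg_pow, pow_succ]
      ring

end HasCoeffs

noncomputable def collatzOp (wb wf : ℝ) : Module.End ℝ (ℕ → ℂ) where
  toFun b n := wb * b (2 * n) + if n % 6 = 4 then wf * b ((n - 1) / 3) else 0
  map_add' b c := by ext n; simp only [Pi.add_apply]; split_ifs <;> ring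
  map_smul' r b := by
    ext n; simp only [Pi.smul_apply, Complex.real_smul, RingHom.id_apply]; split_ifs <;> ring

lemma collatzOp_apply (wb wf : ℝ) (b : ℕ → ℂ) (n : ℕ) :
    collatzOp wb wf b n = wb * b (2 * n) + if n % 6 = 4 then wf * b ((n - 1) / 3) else 0 :=
  rfl

lemma collatzOp_nonneg {wb wf : ℝ} (hwb : 0 ≤ wb) (hwf : 0 ≤ wf) {b : ℕ → ℂ} (hb : 0 ≤ b) :
    0 ≤ collatzOp wb wf b := by
  have hwb' : (0 : ℂ) ≤ wb := Complex.zero_le_real.mpr hwb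
  have hwf' : (0 : ℂ) ≤ wf := Complex.zero_le_real.mpr hwf
  intro n
  change 0 ≤ collatzOp wb wf b n
  rw [collatzOp_apply]
  split_ifs
  · exact add_nonneg (mul_nonneg hwb' (hb _)) (mul_nonneg hwf' (hb _))
  · simpa using mul_nonneg hwb' (hb _)

lemma norm_collatzOp_le {wb wf : ℝ} (hwb : 0 ≤ wb) (hwf : 0 ≤ wf) {b : ℕ → ℂ} {M : ℝ}
    (hb : ∀ n, ‖b n‖ ≤ M) (n : ℕ) : ‖collatzOp wb wf b n‖ ≤ (wb + wf) * M := by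
  have hM : 0 ≤ M := (norm_nonneg _).trans (hb 0)
  rw [collatzOp_apply, add_mul]
  refine (norm_add_le _ _).trans (add_le_add ?_ ?_)
  · rw [norm_mul, Complex.norm_real, Real.norm_of_nonneg hwb]
    exact mul_le_mul_of_nonneg_left (hb _) hwb
  · split_ifs
    · rw [norm_mul, Complex.norm_real, Real.norm_of_nonneg hwf]
      exact mul_le_mul_of_nonneg_left (hb _) hwf
    · simpa using mul_nonneg hwf hM

lemma IsSolution.coeffs_eq {k : ℕ} {wb wf : ℝ} {f : ℂ → ℂ} {a : ℕ → ℂ}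
    (hf : IsSolution k wb wf f) (ha : HasCoeffs f a) :
    a = collatzOp wb wf a + Pi.single k 1 := by
  refine ha.unique fun y hy => ?_
  obtain ⟨x, rfl⟩ := IsAlgClosed.exists_pow_nat_eq y two_pos
  have hx : ‖x‖ < 1 := by
    rw [norm_pow] at hy
    exact (pow_lt_one_iff_of_nonneg (norm_nonneg _) two_ne_zero).mp hy
  have hsingle :
      HasSum (fun n => 2 * (Pi.single k 1 : ℕ → ℂ) n * (x ^ 2) ^ n) (2 * x ^ (2 * k)) := by
    simpa [pow_mul] using hasSum_single
      (f := fun n => 2 * (Pi.single k 1 : ℕ → ℂ) n * (x ^ 2) ^ n) k fun n hn => by simp [hn]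
  have hsum := (((ha.hasSum_even_part hx).mul_left (wb : ℂ)).add
    ((ha.hasSum_odd_part hx).mul_left (wf : ℂ))).add hsingle
  rw [← mul_assoc, ← hf.2.2 x hx] at hsum
  have hhalf := hsum.mul_left (1 / 2 : ℂ)
  rw [one_div, inv_mul_cancel_left₀ two_ne_zero] at hhalf
  refine hhalf.congr_fun fun n => ?_
  simp only [collatzOp_apply, Pi.add_apply]
  split_ifs <;> ring

lemma one_pos_of_eq_collatzOp_add_single_five {wb wf : ℝ} (hwb : 0 < wb) (hwf : 0 < wf)
    {a : ℕ → ℂ} (ha₀ : 0 ≤ a) (ha : a = collatzOp wb wf a + Pi.single 5 1) : 0 < a 1 := by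
  have hwb' : (0 : ℂ) ≤ wb := Complex.zero_le_real.mpr hwb.le
  have hwf' : (0 : ℂ) ≤ wf := Complex.zero_le_real.mpr hwf.le
  have h n := congrFun ha n
  simp only [Pi.add_apply, collatzOp_apply, Pi.single_apply] at h
  have h1 := h 1
  have h2 := h 2
  have h4 := h 4
  have h8 := h 8
  have h16 := h 16
  have h5 := h 5
  norm_num at h1 h2 h4 h8 h16 h5
  have hexpand : a 1 = (wb ^ 4 * wf : ℝ) +
      (wb ^ 5 * wf * a 10 + wb ^ 5 * a 32 + wb ^ 2 * wf * a 1) := by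
    push_cast
    linear_combination h1 + wb * h2 + wb ^ 2 * h4 + wb ^ 3 * h8 + wb ^ 4 * h16 + wb ^ 4 * wf * h5
  rw [hexpand]
  refine add_pos_of_pos_of_nonneg (Complex.zero_lt_real.mpr (by positivity)) ?_
  exact add_nonneg
    (add_nonneg (mul_nonneg (mul_nonneg (pow_nonneg hwb' 5) hwf') (ha₀ 10))
      (mul_nonneg (pow_nonneg hwb' 5) (ha₀ 32)))
    (mul_nonneg (mul_nonneg (pow_nonneg hwb' 2) hwf') (ha₀ 1))

theorem stmt_16 (wb wf : ℝ) (f : ℂ → ℂ) (a : ℕ → ℂ)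
    (hwb : 0 < wb) (hwf : 0 < wf) (hw : wb + wf < 1)
    (hf : IsSolution 5 wb wf f) (ha : HasCoeffs f a) :
    (a 1).im = 0 ∧ 0 < (a 1).re := by
  obtain ⟨C, hC⟩ := hf.2.1
  have hrec := hf.coeffs_eq ha
  have hnonneg : 0 ≤ a :=
    Module.End.nonneg_of_eq_add_of_contracting (fun _ => collatzOp_nonneg hwb.le hwf.le)
      (by positivity) hw (fun b M hb => norm_collatzOp_le hwb.le hwf.le hb) (ha.norm_le hC)
      (Pi.single_nonneg.mpr zero_le_one) hrec
  obtain ⟨hre, him⟩ :=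
    Complex.pos_iff.mp (one_pos_of_eq_collatzOp_add_single_five hwb hwf hnonneg hrec)
  exact ⟨him.symm, hre⟩
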